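/- arXiv:1512.04212 — 4 statements merged into one kernel-verified Lean document; each statement's English description precedes it below -/
import Mathlib

section
/- Suppose Λ = ⋃_{j=1}^M L*(u_j + ℤ^N) and there exist M points a_1,…,a_M ∈ Λ such that Λ(a_i,a_k) ⊄ Λ for all i ≠ k. Then for every representation Λ = ⋃_{j=1}^{M₀} L₀*(ũ_j + ℤ^N) with L₀ an invertible linear transformation of ℝ^N and ũ_1,…,ũ_{M₀} ∈ ℝ^N, one has M₀ ≥ M; i.e., the number M in the given representation of Λ is the smallest possible. -/
open Real

noncomputable section

/-- Minimality of the number of translates: if there are `M` points of `Λ` such that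
the one-dimensional lattice generated by any two of them is not contained in `Λ`,
then any representation `Λ = ⋃_{j=1}^{M₀} L₀*(u₀_j + ℤᴺ)` has `M₀ ≥ M`. -/
theorem stmt_2 (N M : ℕ) (hN : 0 < N) (hM : 0 < M)
    (u : Fin M → (Fin N → ℝ))
    (L : Matrix (Fin N) (Fin N) ℝ) (hL : IsUnit L.det)
    (Λ : Set (Fin N → ℝ))
    (hΛ : Λ = ⋃ j : Fin M,
      {x | ∃ m : Fin N → ℤ, x = L.transpose.mulVec (u j + fun i => (m i : ℝ))})
    (a : Fin M → (Fin N → ℝ)) (ha : ∀ i, a i ∈ Λ)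
    (hsep : ∀ i k : Fin M, i ≠ k →
      ¬ ({p | ∃ n : ℤ, p = a i + (n : ℝ) • (a k - a i)} ⊆ Λ)) :
    ∀ (M₀ : ℕ) (u₀ : Fin M₀ → (Fin N → ℝ)) (L₀ : Matrix (Fin N) (Fin N) ℝ),
      IsUnit L₀.det →
      Λ = (⋃ j : Fin M₀,
        {x | ∃ m : Fin N → ℤ, x = L₀.transpose.mulVec (u₀ j + fun i => (m i : ℝ))}) →
      M ≤ M₀ := by
  intro M₀ u₀ L₀ hL₀ hΛ₀
  by_contra hlt
  push_neg at hlt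
  have hmem : ∀ i, ∃ j : Fin M₀, ∃ m : Fin N → ℤ,
      a i = L₀.transpose.mulVec (u₀ j + fun t => (m t : ℝ)) := by
    intro i
    have h := ha i
    rw [hΛ₀] at h
    simpa using h
  choose f m hm using hmem
  obtain ⟨i, k, hik, hfik⟩ := Fintype.exists_ne_map_eq_of_card_lt f (by simpa using hlt)
  apply hsep i k hik
  intro p hp
  obtain ⟨n, hpn⟩ := hp
  rw [hΛ₀]
  refine Set.mem_iUnion.2 ⟨f i, ⟨m i + n • (m k - m i), ?_⟩⟩
  have hk : a k = L₀.transpose.mulVec (u₀ (f i) + fun t => (m k t : ℝ)) := by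
    rw [hfik]; exact hm k
  have hi := hm i
  have hcast : (u₀ (f i) + fun t => (((m i + n • (m k - m i)) t : ℤ) : ℝ)) =
      (u₀ (f i) + fun t => ((m i t : ℝ))) + (n : ℝ) •
        ((u₀ (f i) + fun t => ((m k t : ℝ))) - (u₀ (f i) + fun t => ((m i t : ℝ)))) := by
    funext t
    simp only [Pi.add_apply, Pi.smul_apply, Pi.sub_apply, smul_eq_mul]
    push_cast
    ring
  rw [hpn, hi, hk, hcast]
  simp only [Matrix.mulVec_add, Matrix.mulVec_smul, Matrix.mulVec_sub]
end
end

section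
/- For every α ∈ (0, π/2), setting β = π·cos α, γ = π·sin α, C = e^{iβ} and D = e^{iγ}, the imaginary part of C²D² − 4CD + C² + D² + 1 is nonzero; in particular C²D² − 4CD + C² + D² + 1 ≠ 0. -/
open Real

/-- For `α ∈ (0, π/2)`, with `β = π cos α`, `γ = π sin α`, `C = e^{iβ}`, `D = e^{iγ}`,
the imaginary part of `C²D² − 4CD + C² + D² + 1` is nonzero; in particular this
expression is nonzero. -/
theorem stmt_13 (α : ℝ) (hα : α ∈ Set.Ioo 0 (π / 2))
    (C D : ℂ)
    (hC : C = Complex.exp (Complex.I * ((π * Real.cos α : ℝ) : ℂ)))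
    (hD : D = Complex.exp (Complex.I * ((π * Real.sin α : ℝ) : ℂ))) :
    (C ^ 2 * D ^ 2 - 4 * (C * D) + C ^ 2 + D ^ 2 + 1).im ≠ 0 ∧
      C ^ 2 * D ^ 2 - 4 * (C * D) + C ^ 2 + D ^ 2 + 1 ≠ 0 := by
  obtain ⟨hα0, hα2⟩ := hα
  set b : ℝ := π * Real.cos α with hb
  set c : ℝ := π * Real.sin α with hc
  -- basic bounds
  have hπ : (0:ℝ) < π := Real.pi_pos
  have hca : 0 < Real.cos α := Real.cos_pos_of_mem_Ioo ⟨by linarith, hα2⟩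
  have hsa : 0 < Real.sin α := Real.sin_pos_of_pos_of_lt_pi hα0 (by linarith)
  have hca1 : Real.cos α < 1 := by
    have := Real.cos_lt_cos_of_nonneg_of_le_pi (le_refl 0) (by linarith) hα0
    simpa using this
  have hsa1 : Real.sin α < 1 := by
    have : Real.sin α ≤ 1 := Real.sin_le_one α
    rcases lt_or_eq_of_le this with h | h
    · exact h
    · exfalso
      have := Real.sin_sq_add_cos_sq α
      nlinarith
  -- sum bound: 1 < cos α + sin α < 2
  have hs1 : 1 < Real.cos α + Real.sin α := by
    have := Real.sin_sq_add_cos_sq α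
    nlinarith
  have hs2 : Real.cos α + Real.sin α < 2 := by linarith
  -- the imaginary part formula
  have him : (C ^ 2 * D ^ 2 - 4 * (C * D) + C ^ 2 + D ^ 2 + 1).im
      = 4 * Real.sin (b + c) * (Real.cos b * Real.cos c - 1) := by
    subst hC hD
    simp only [Complex.exp_im, Complex.exp_re, Complex.mul_im, Complex.mul_re,
      Complex.I_re, Complex.I_im, Complex.ofReal_re, Complex.ofReal_im,
      Complex.sub_im, Complex.add_im, Complex.one_im, pow_two,
      Complex.re_ofNat, Complex.im_ofNat, mul_zero, zero_mul, sub_zero, zero_sub,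
      zero_add, add_zero, one_mul, mul_one, Real.sin_zero, Real.cos_zero,
      Real.exp_zero, Real.sin_add, Real.cos_add, neg_zero]
    ring_nf
    linear_combination (-2*Real.cos b*Real.sin b) * Real.sin_sq_add_cos_sq c +
      (-2*Real.cos c*Real.sin c) * Real.sin_sq_add_cos_sq b
  -- sin (b + c) < 0
  have hbc : b + c = π * (Real.cos α + Real.sin α) := by ring
  have hsin : Real.sin (b + c) < 0 := by
    have h1 : 0 < b + c - π := by rw [hbc]; nlinarith
    have h2 : b + c - π < π := by rw [hbc]; nlinarith
    have := Real.sin_pos_of_pos_of_lt_pi h1 h2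
    have heq : Real.sin (b + c) = -Real.sin (b + c - π) := by
      rw [← Real.sin_add_pi]; ring_nf
    rw [heq]; linarith
  -- cos b cos c - 1 < 0
  have hb0 : 0 < b := by positivity
  have hbπ : b < π := by nlinarith
  have hcb1 : Real.cos b < 1 := by
    have := Real.cos_lt_cos_of_nonneg_of_le_pi (le_refl 0) (le_of_lt hbπ) hb0
    simpa using this
  have hcb2 : -1 < Real.cos b := by
    have := Real.cos_lt_cos_of_nonneg_of_le_pi (by linarith : (0:ℝ) ≤ b) (le_refl π) hbπ
    simp at this; linarith
  have hcc1 : Real.cos c ≤ 1 := Real.cos_le_one c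
  have hcc2 : -1 ≤ Real.cos c := Real.neg_one_le_cos c
  have hprod : Real.cos b * Real.cos c - 1 < 0 := by
    have h1 : Real.cos b * Real.cos c ≤ |Real.cos b| * |Real.cos c| := by
      rw [← abs_mul]; exact le_abs_self _
    have h2 : |Real.cos c| ≤ 1 := Real.abs_cos_le_one c
    have h3 : |Real.cos b| < 1 := abs_lt.2 ⟨hcb2, hcb1⟩
    nlinarith [abs_nonneg (Real.cos b), abs_nonneg (Real.cos c)]
  have hpos : 0 < (C ^ 2 * D ^ 2 - 4 * (C * D) + C ^ 2 + D ^ 2 + 1).im := by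
    rw [him]; nlinarith
  refine ⟨ne_of_gt hpos, fun h => ?_⟩
  rw [h] at hpos
  simp at hpos
end

section
/- For every α ∈ (0, π/2), setting C = e^{iπ·cos α} and D = e^{iπ·sin α}, the 4×4 complex matrix [[1, 1, 1, 1], [C^{-1}, D, C, D^{-1}], [D, C, D^{-1}, C^{-1}], [D·C^{-1}, C·D, C·D^{-1}, C^{-1}·D^{-1}]] is invertible. -/
/-!
Writing `C = e^{ix}` and `D = e^{iy}`, the factorisation of the determinant collapses via
`C² - 1 = 2i C sin x` and `C² + 1 = 2C cos x` to
`det = 16 sin x sin y (cos x cos y - 1)`.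
For `x = π cos α`, `y = π sin α` with `α ∈ (0, π/2)` both sines are positive, and
`cos x cos y < 1` because `2 cos x cos y ≤ cos² x + cos² y = 2 - sin² x - sin² y`.
-/

open Real

def twoSquareMatrix {K : Type*} [Field K] (C D : K) : Matrix (Fin 4) (Fin 4) K :=
  !![1, 1, 1, 1;
     C⁻¹, D, C, D⁻¹;
     D, C, D⁻¹, C⁻¹;
     D * C⁻¹, C * D, C * D⁻¹, C⁻¹ * D⁻¹]

theorem det_twoSquareMatrix {K : Type*} [Field K] {C D : K} (hC : C ≠ 0) (hD : D ≠ 0) :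
    C ^ 2 * D ^ 2 * (twoSquareMatrix C D).det =
      -((C ^ 2 - 1) * (D ^ 2 - 1) * ((C ^ 2 + 1) * (D ^ 2 + 1) - 4 * C * D)) := by
  simp [twoSquareMatrix, Matrix.det_succ_row_zero, Fin.sum_univ_succ, Fin.succAbove]
  field_simp
  ring

namespace Complex

theorem exp_I_mul_sq_add_one (z : ℂ) : exp (I * z) ^ 2 + 1 = 2 * exp (I * z) * cos z := by
  rw [mul_comm I z, exp_mul_I]
  linear_combination -sin_sq_add_cos_sq z + sin z ^ 2 * I_sq

theorem exp_I_mul_sq_sub_one (z : ℂ) : exp (I * z) ^ 2 - 1 = 2 * I * exp (I * z) * sin z := by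
  rw [mul_comm I z, exp_mul_I]
  linear_combination sin_sq_add_cos_sq z - sin z ^ 2 * I_sq

end Complex

open Complex in
theorem det_twoSquareMatrix_exp (x y : ℂ) :
    (twoSquareMatrix (exp (I * x)) (exp (I * y))).det =
      16 * sin x * sin y * (cos x * cos y - 1) := by
  have hC := exp_ne_zero (I * x)
  have hD := exp_ne_zero (I * y)
  refine mul_left_cancel₀ (mul_ne_zero (pow_ne_zero 2 hC) (pow_ne_zero 2 hD)) ?_
  rw [det_twoSquareMatrix hC hD, exp_I_mul_sq_sub_one, exp_I_mul_sq_sub_one,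
    exp_I_mul_sq_add_one, exp_I_mul_sq_add_one]
  linear_combination
    (16 * exp (I * x) ^ 2 * exp (I * y) ^ 2 * sin x * sin y * (1 - cos x * cos y)) * I_sq

theorem Real.cos_mul_cos_lt_one {x : ℝ} (y : ℝ) (hx : sin x ≠ 0) : cos x * cos y < 1 := by
  nlinarith [sq_nonneg (cos x - cos y), sin_sq_add_cos_sq x, sin_sq_add_cos_sq y,
    sq_pos_of_ne_zero hx, sq_nonneg (sin y)]

theorem Real.sin_pi_mul_pos {t : ℝ} (h0 : 0 < t) (h1 : t < 1) : 0 < sin (π * t) :=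
  sin_pos_of_pos_of_lt_pi (by positivity) (by nlinarith [pi_pos])

/-- For `α ∈ (0, π/2)`, with `C = e^{iπ cos α}` and `D = e^{iπ sin α}`, the 4×4 matrix
arising in the two-square tiling is invertible (condition (A2)). -/
theorem stmt_14 (α : ℝ) (hα : α ∈ Set.Ioo 0 (π / 2))
    (C D : ℂ)
    (hC : C = Complex.exp (Complex.I * ((π * Real.cos α : ℝ) : ℂ)))
    (hD : D = Complex.exp (Complex.I * ((π * Real.sin α : ℝ) : ℂ))) :
    IsUnit (Matrix.det !![(1 : ℂ), 1, 1, 1;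
                          C⁻¹, D, C, D⁻¹;
                          D, C, D⁻¹, C⁻¹;
                          D * C⁻¹, C * D, C * D⁻¹, C⁻¹ * D⁻¹]) := by
  obtain ⟨hα0, hαπ⟩ := hα
  have hsin : 0 < sin α := sin_pos_of_pos_of_lt_pi hα0 (by linarith [pi_pos])
  have hcos : 0 < cos α := cos_pos_of_mem_Ioo ⟨by linarith, hαπ⟩
  have hx := sin_pi_mul_pos hcos (by nlinarith [sin_sq_add_cos_sq α])
  have hy := sin_pi_mul_pos hsin (by nlinarith [sin_sq_add_cos_sq α])
  have hdet : 16 * sin (π * cos α) * sin (π * sin α) *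
      (cos (π * cos α) * cos (π * sin α) - 1) ≠ 0 :=
    mul_ne_zero (by positivity) (sub_neg.2 (cos_mul_cos_lt_one _ hx.ne')).ne
  subst hC hD
  rw [isUnit_iff_ne_zero]
  change (twoSquareMatrix _ _).det ≠ 0
  rw [det_twoSquareMatrix_exp]
  exact_mod_cast hdet
end

section
/- Let u₁ = (1/6)(2, 5−√3), u₂ = (1/6)(−1+√3, 5−√3), u₃ = (1/6)(−1+√3, 2), u₄ = (1/6)(2, −1+√3), u₅ = (1/6)(5−√3, −1+√3), u₆ = (1/6)(5−√3, 2), u₇ = (1/6)(4, 7−√3), u₈ = (1/6)(1+√3, 7−√3), u₉ = (1/6)(1+√3, 4), u₁₀ = (1/6)(4, 1+√3), u₁₁ = (1/6)(7−√3, 1+√3), u₁₂ = (1/6)(7−√3, 4), and let v₁,…,v₁₂ be 2π·(0,0), 2π·(0,1), 2π·(1,0), 2π·(1,1), 2π·(2,0), 2π·(2,1), 2π·(3,0), 2π·(3,1), 2π·(4,0), 2π·(4,1), 2π·(5,0), 2π·(5,1). Then the 12×12 matrix E = (e^{i⟨u_j, v_k⟩})_{j,k=1}^{12} is invertible. -/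
open Real

private lemma sqrt3_irr' : Irrational (Real.sqrt 3) := by
  simpa using (Nat.prime_three).irrational_sqrt

private lemma exp_ne_exp (α β : ℝ) (a b : ℤ)
    (h : α - β = (a + b * Real.sqrt 3) / 6)
    (hab : b ≠ 0 ∨ ¬ ((6:ℤ) ∣ a)) :
    Complex.exp (Complex.I * (2 * π * α)) ≠ Complex.exp (Complex.I * (2 * π * β)) := by
  intro hcontr
  have h1 : Complex.exp (Complex.I * (2 * π * α) - Complex.I * (2 * π * β)) = 1 := by
    rw [Complex.exp_sub, hcontr, div_self (Complex.exp_ne_zero _)]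
  rw [Complex.exp_eq_one_iff] at h1
  obtain ⟨n, hn⟩ := h1
  have h2 : ((2 * π * α - 2 * π * β : ℝ) : ℂ) = ((n * (2 * π) : ℝ) : ℂ) := by
    have hI : (Complex.I) * ((2 * π * α - 2 * π * β : ℝ) : ℂ)
        = Complex.I * ((n * (2 * π) : ℝ) : ℂ) := by
      push_cast
      linear_combination hn
    exact mul_left_cancel₀ Complex.I_ne_zero hI
  have h3 : 2 * π * α - 2 * π * β = n * (2 * π) := by exact_mod_cast h2
  have h4 : α - β = n := by
    have := Real.pi_ne_zero
    have h5 : 2 * π * (α - β - n) = 0 := by ring_nf; ring_nf at h3; linarith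
    rcases mul_eq_zero.mp h5 with h6 | h6
    · exfalso; rcases mul_eq_zero.mp h6 with h7 | h7 <;> simp_all
    · linarith
  rw [h] at h4
  have keyrat : b ≠ 0 → False := by
    intro hb
    have hb' : ((b:ℝ)) ≠ 0 := Int.cast_ne_zero.mpr hb
    have hs : Real.sqrt 3 = ((6 * n - a : ℤ) : ℝ) / ((b : ℤ) : ℝ) := by
      field_simp; push_cast; linarith [h4]
    have hirr : Irrational (((6 * n - a : ℤ) : ℝ) / ((b : ℤ) : ℝ)) := hs ▸ sqrt3_irr'
    rw [show ((6 * n - a : ℤ) : ℝ) / ((b : ℤ) : ℝ)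
        = ((((6 * n - a : ℤ) : ℚ) / ((b : ℤ) : ℚ) : ℚ) : ℝ) by push_cast; ring] at hirr
    exact (Rat.not_irrational _) hirr
  rcases hab with hb | ha
  · exact keyrat hb
  · have hb0 : b = 0 := by by_contra hb; exact keyrat hb
    subst hb0
    apply ha
    refine ⟨n, ?_⟩
    have : (a : ℝ) = 6 * n := by push_cast at h4; linarith
    exact_mod_cast this


set_option maxHeartbeats 1600000 in
/-- Truncated trihexagonal tiling: for the translation vectors `u₁,…,u₁₂` and the
choice `v_k ∈ 2π·{(0,0),(0,1),(1,0),(1,1),(2,0),(2,1),(3,0),(3,1),(4,0),(4,1),(5,0),(5,1)}`,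
the matrix `E = (e^{i⟨u_j,v_k⟩})` is invertible (condition (A2)). -/
theorem stmt_17
    (u : Fin 12 → Fin 2 → ℝ)
    (hu : u = ![
      (1 / 6 : ℝ) • ![2, 5 - Real.sqrt 3],
      (1 / 6 : ℝ) • ![-1 + Real.sqrt 3, 5 - Real.sqrt 3],
      (1 / 6 : ℝ) • ![-1 + Real.sqrt 3, 2],
      (1 / 6 : ℝ) • ![2, -1 + Real.sqrt 3],
      (1 / 6 : ℝ) • ![5 - Real.sqrt 3, -1 + Real.sqrt 3],
      (1 / 6 : ℝ) • ![5 - Real.sqrt 3, 2],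
      (1 / 6 : ℝ) • ![4, 7 - Real.sqrt 3],
      (1 / 6 : ℝ) • ![1 + Real.sqrt 3, 7 - Real.sqrt 3],
      (1 / 6 : ℝ) • ![1 + Real.sqrt 3, 4],
      (1 / 6 : ℝ) • ![4, 1 + Real.sqrt 3],
      (1 / 6 : ℝ) • ![7 - Real.sqrt 3, 1 + Real.sqrt 3],
      (1 / 6 : ℝ) • ![7 - Real.sqrt 3, 4]])
    (v : Fin 12 → Fin 2 → ℝ)
    (hv : v = ![
      (2 * π) • ![0, 0], (2 * π) • ![0, 1],
      (2 * π) • ![1, 0], (2 * π) • ![1, 1],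
      (2 * π) • ![2, 0], (2 * π) • ![2, 1],
      (2 * π) • ![3, 0], (2 * π) • ![3, 1],
      (2 * π) • ![4, 0], (2 * π) • ![4, 1],
      (2 * π) • ![5, 0], (2 * π) • ![5, 1]])
    (E : Matrix (Fin 12) (Fin 12) ℂ)
    (hE : E = Matrix.of fun j k =>
      Complex.exp (Complex.I * ((∑ i, u j i * v k i : ℝ) : ℂ))) :
    IsUnit E.det := by
  by_contra hdet
  have hdet0 : E.det = 0 := by
    by_contra h
    exact hdet (isUnit_iff_ne_zero.mpr h)
  obtain ⟨c, hc0, hker⟩ := (Matrix.exists_mulVec_eq_zero_iff).mpr hdet0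
  have hEntry : ∀ (j k : Fin 12), E j k =
      Complex.exp (Complex.I * (2 * π * (u j 0))) ^ (k.val / 2) *
      Complex.exp (Complex.I * (2 * π * (u j 1))) ^ (k.val % 2) := by
    intro j k
    rw [hE]
    simp only [Matrix.of_apply, Fin.sum_univ_two]
    fin_cases k <;> simp only [hv] <;> norm_num <;>
      (try simp only [← Complex.exp_nat_mul, ← Complex.exp_add]) <;>
      (try (congr 1; push_cast; ring))
  have hu00 : u 0 0 = 1 / 6 * (2) := by rw [hu]; exact rfl
  have hu01 : u 0 1 = 1 / 6 * (5 - Real.sqrt 3) := by rw [hu]; exact rfl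
  have hu10 : u 1 0 = 1 / 6 * (-1 + Real.sqrt 3) := by rw [hu]; exact rfl
  have hu11 : u 1 1 = 1 / 6 * (5 - Real.sqrt 3) := by rw [hu]; exact rfl
  have hu20 : u 2 0 = 1 / 6 * (-1 + Real.sqrt 3) := by rw [hu]; exact rfl
  have hu21 : u 2 1 = 1 / 6 * (2) := by rw [hu]; exact rfl
  have hu30 : u 3 0 = 1 / 6 * (2) := by rw [hu]; exact rfl
  have hu31 : u 3 1 = 1 / 6 * (-1 + Real.sqrt 3) := by rw [hu]; exact rfl
  have hu40 : u 4 0 = 1 / 6 * (5 - Real.sqrt 3) := by rw [hu]; exact rfl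
  have hu41 : u 4 1 = 1 / 6 * (-1 + Real.sqrt 3) := by rw [hu]; exact rfl
  have hu50 : u 5 0 = 1 / 6 * (5 - Real.sqrt 3) := by rw [hu]; exact rfl
  have hu51 : u 5 1 = 1 / 6 * (2) := by rw [hu]; exact rfl
  have hu60 : u 6 0 = 1 / 6 * (4) := by rw [hu]; exact rfl
  have hu61 : u 6 1 = 1 / 6 * (7 - Real.sqrt 3) := by rw [hu]; exact rfl
  have hu70 : u 7 0 = 1 / 6 * (1 + Real.sqrt 3) := by rw [hu]; exact rfl
  have hu71 : u 7 1 = 1 / 6 * (7 - Real.sqrt 3) := by rw [hu]; exact rfl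
  have hu80 : u 8 0 = 1 / 6 * (1 + Real.sqrt 3) := by rw [hu]; exact rfl
  have hu81 : u 8 1 = 1 / 6 * (4) := by rw [hu]; exact rfl
  have hu90 : u 9 0 = 1 / 6 * (4) := by rw [hu]; exact rfl
  have hu91 : u 9 1 = 1 / 6 * (1 + Real.sqrt 3) := by rw [hu]; exact rfl
  have hu100 : u 10 0 = 1 / 6 * (7 - Real.sqrt 3) := by rw [hu]; exact rfl
  have hu101 : u 10 1 = 1 / 6 * (1 + Real.sqrt 3) := by rw [hu]; exact rfl
  have hu110 : u 11 0 = 1 / 6 * (7 - Real.sqrt 3) := by rw [hu]; exact rfl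
  have hu111 : u 11 1 = 1 / 6 * (4) := by rw [hu]; exact rfl
  have hrow : ∀ j : Fin 12,
      ((c 0 : ℂ) + c 2 * Complex.exp (Complex.I * (2 * π * (u j 0)))
         + c 4 * Complex.exp (Complex.I * (2 * π * (u j 0))) ^ 2
         + c 6 * Complex.exp (Complex.I * (2 * π * (u j 0))) ^ 3
         + c 8 * Complex.exp (Complex.I * (2 * π * (u j 0))) ^ 4
         + c 10 * Complex.exp (Complex.I * (2 * π * (u j 0))) ^ 5)
      + Complex.exp (Complex.I * (2 * π * (u j 1))) *
        (c 1 + c 3 * Complex.exp (Complex.I * (2 * π * (u j 0)))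
         + c 5 * Complex.exp (Complex.I * (2 * π * (u j 0))) ^ 2
         + c 7 * Complex.exp (Complex.I * (2 * π * (u j 0))) ^ 3
         + c 9 * Complex.exp (Complex.I * (2 * π * (u j 0))) ^ 4
         + c 11 * Complex.exp (Complex.I * (2 * π * (u j 0))) ^ 5) = 0 := by
    intro j
    have h0 := congrFun hker j
    simp only [Matrix.mulVec, dotProduct, Fin.sum_univ_succ, Fin.sum_univ_zero,
      hEntry, dotProduct, Pi.zero_apply] at h0
    norm_num at h0
    rw [show ((2:Fin 11).succ : Fin 12) = 3 from rfl, show ((2:Fin 10).succ.succ : Fin 12) = 4 from rfl, show ((2:Fin 9).succ.succ.succ : Fin 12) = 5 from rfl, show ((2:Fin 8).succ.succ.succ.succ : Fin 12) = 6 from rfl, show ((2:Fin 7).succ.succ.succ.succ.succ : Fin 12) = 7 from rfl, show ((2:Fin 6).succ.succ.succ.succ.succ.succ : Fin 12) = 8 from rfl, show ((2:Fin 5).succ.succ.succ.succ.succ.succ.succ : Fin 12) = 9 from rfl, show ((2:Fin 4).succ.succ.succ.succ.succ.succ.succ.succ : Fin 12) = 10 from rfl, show ((2:Fin 3).succ.succ.succ.succ.succ.succ.succ.succ.succ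 : Fin 12) = 11 from rfl] at h0
    linear_combination h0
  have hxeq0 : Complex.exp (Complex.I * (2 * π * (u 3 0))) = Complex.exp (Complex.I * (2 * π * (u 0 0))) := by
    rw [hu00, hu30]
  have hyne0 : Complex.exp (Complex.I * (2 * π * (u 0 1))) ≠ Complex.exp (Complex.I * (2 * π * (u 3 1))) := by
    rw [hu01, hu31]
    refine exp_ne_exp _ _ (6) (-2) ?_ (Or.inl (by norm_num))
    push_cast
    ring
  have hP1_0 : c 1 + c 3 * Complex.exp (Complex.I * (2 * π * (u 0 0))) + c 5 * Complex.exp (Complex.I * (2 * π * (u 0 0))) ^ 2 + c 7 * Complex.exp (Complex.I * (2 * π * (u 0 0))) ^ 3 + c 9 * Complex.exp (Complex.I * (2 * π * (u 0 0))) ^ 4 + c 11 * Complex.exp (Complex.I * (2 * π * (u 0 0))) ^ 5 = 0 := by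
    have h1 := hrow 0
    have h2 := hrow 3
    rw [hxeq0] at h2
    have h3 : (Complex.exp (Complex.I * (2 * π * (u 0 1))) - Complex.exp (Complex.I * (2 * π * (u 3 1)))) * (c 1 + c 3 * Complex.exp (Complex.I * (2 * π * (u 0 0))) + c 5 * Complex.exp (Complex.I * (2 * π * (u 0 0))) ^ 2 + c 7 * Complex.exp (Complex.I * (2 * π * (u 0 0))) ^ 3 + c 9 * Complex.exp (Complex.I * (2 * π * (u 0 0))) ^ 4 + c 11 * Complex.exp (Complex.I * (2 * π * (u 0 0))) ^ 5) = 0 := by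
      linear_combination h1 - h2
    rcases mul_eq_zero.mp h3 with h4 | h4
    · exact absurd (sub_eq_zero.mp h4) hyne0
    · exact h4
  have hP0_0 : c 0 + c 2 * Complex.exp (Complex.I * (2 * π * (u 0 0))) + c 4 * Complex.exp (Complex.I * (2 * π * (u 0 0))) ^ 2 + c 6 * Complex.exp (Complex.I * (2 * π * (u 0 0))) ^ 3 + c 8 * Complex.exp (Complex.I * (2 * π * (u 0 0))) ^ 4 + c 10 * Complex.exp (Complex.I * (2 * π * (u 0 0))) ^ 5 = 0 := by
    linear_combination (hrow 0) - Complex.exp (Complex.I * (2 * π * (u 0 1))) * hP1_0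
  have hxeq1 : Complex.exp (Complex.I * (2 * π * (u 2 0))) = Complex.exp (Complex.I * (2 * π * (u 1 0))) := by
    rw [hu10, hu20]
  have hyne1 : Complex.exp (Complex.I * (2 * π * (u 1 1))) ≠ Complex.exp (Complex.I * (2 * π * (u 2 1))) := by
    rw [hu11, hu21]
    refine exp_ne_exp _ _ (3) (-1) ?_ (Or.inl (by norm_num))
    push_cast
    ring
  have hP1_1 : c 1 + c 3 * Complex.exp (Complex.I * (2 * π * (u 1 0))) + c 5 * Complex.exp (Complex.I * (2 * π * (u 1 0))) ^ 2 + c 7 * Complex.exp (Complex.I * (2 * π * (u 1 0))) ^ 3 + c 9 * Complex.exp (Complex.I * (2 * π * (u 1 0))) ^ 4 + c 11 * Complex.exp (Complex.I * (2 * π * (u 1 0))) ^ 5 = 0 := by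
    have h1 := hrow 1
    have h2 := hrow 2
    rw [hxeq1] at h2
    have h3 : (Complex.exp (Complex.I * (2 * π * (u 1 1))) - Complex.exp (Complex.I * (2 * π * (u 2 1)))) * (c 1 + c 3 * Complex.exp (Complex.I * (2 * π * (u 1 0))) + c 5 * Complex.exp (Complex.I * (2 * π * (u 1 0))) ^ 2 + c 7 * Complex.exp (Complex.I * (2 * π * (u 1 0))) ^ 3 + c 9 * Complex.exp (Complex.I * (2 * π * (u 1 0))) ^ 4 + c 11 * Complex.exp (Complex.I * (2 * π * (u 1 0))) ^ 5) = 0 := by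
      linear_combination h1 - h2
    rcases mul_eq_zero.mp h3 with h4 | h4
    · exact absurd (sub_eq_zero.mp h4) hyne1
    · exact h4
  have hP0_1 : c 0 + c 2 * Complex.exp (Complex.I * (2 * π * (u 1 0))) + c 4 * Complex.exp (Complex.I * (2 * π * (u 1 0))) ^ 2 + c 6 * Complex.exp (Complex.I * (2 * π * (u 1 0))) ^ 3 + c 8 * Complex.exp (Complex.I * (2 * π * (u 1 0))) ^ 4 + c 10 * Complex.exp (Complex.I * (2 * π * (u 1 0))) ^ 5 = 0 := by
    linear_combination (hrow 1) - Complex.exp (Complex.I * (2 * π * (u 1 1))) * hP1_1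
  have hxeq4 : Complex.exp (Complex.I * (2 * π * (u 5 0))) = Complex.exp (Complex.I * (2 * π * (u 4 0))) := by
    rw [hu40, hu50]
  have hyne4 : Complex.exp (Complex.I * (2 * π * (u 4 1))) ≠ Complex.exp (Complex.I * (2 * π * (u 5 1))) := by
    rw [hu41, hu51]
    refine exp_ne_exp _ _ (-3) (1) ?_ (Or.inl (by norm_num))
    push_cast
    ring
  have hP1_4 : c 1 + c 3 * Complex.exp (Complex.I * (2 * π * (u 4 0))) + c 5 * Complex.exp (Complex.I * (2 * π * (u 4 0))) ^ 2 + c 7 * Complex.exp (Complex.I * (2 * π * (u 4 0))) ^ 3 + c 9 * Complex.exp (Complex.I * (2 * π * (u 4 0))) ^ 4 + c 11 * Complex.exp (Complex.I * (2 * π * (u 4 0))) ^ 5 = 0 := by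
    have h1 := hrow 4
    have h2 := hrow 5
    rw [hxeq4] at h2
    have h3 : (Complex.exp (Complex.I * (2 * π * (u 4 1))) - Complex.exp (Complex.I * (2 * π * (u 5 1)))) * (c 1 + c 3 * Complex.exp (Complex.I * (2 * π * (u 4 0))) + c 5 * Complex.exp (Complex.I * (2 * π * (u 4 0))) ^ 2 + c 7 * Complex.exp (Complex.I * (2 * π * (u 4 0))) ^ 3 + c 9 * Complex.exp (Complex.I * (2 * π * (u 4 0))) ^ 4 + c 11 * Complex.exp (Complex.I * (2 * π * (u 4 0))) ^ 5) = 0 := by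
      linear_combination h1 - h2
    rcases mul_eq_zero.mp h3 with h4 | h4
    · exact absurd (sub_eq_zero.mp h4) hyne4
    · exact h4
  have hP0_4 : c 0 + c 2 * Complex.exp (Complex.I * (2 * π * (u 4 0))) + c 4 * Complex.exp (Complex.I * (2 * π * (u 4 0))) ^ 2 + c 6 * Complex.exp (Complex.I * (2 * π * (u 4 0))) ^ 3 + c 8 * Complex.exp (Complex.I * (2 * π * (u 4 0))) ^ 4 + c 10 * Complex.exp (Complex.I * (2 * π * (u 4 0))) ^ 5 = 0 := by
    linear_combination (hrow 4) - Complex.exp (Complex.I * (2 * π * (u 4 1))) * hP1_4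
  have hxeq6 : Complex.exp (Complex.I * (2 * π * (u 9 0))) = Complex.exp (Complex.I * (2 * π * (u 6 0))) := by
    rw [hu60, hu90]
  have hyne6 : Complex.exp (Complex.I * (2 * π * (u 6 1))) ≠ Complex.exp (Complex.I * (2 * π * (u 9 1))) := by
    rw [hu61, hu91]
    refine exp_ne_exp _ _ (6) (-2) ?_ (Or.inl (by norm_num))
    push_cast
    ring
  have hP1_6 : c 1 + c 3 * Complex.exp (Complex.I * (2 * π * (u 6 0))) + c 5 * Complex.exp (Complex.I * (2 * π * (u 6 0))) ^ 2 + c 7 * Complex.exp (Complex.I * (2 * π * (u 6 0))) ^ 3 + c 9 * Complex.exp (Complex.I * (2 * π * (u 6 0))) ^ 4 + c 11 * Complex.exp (Complex.I * (2 * π * (u 6 0))) ^ 5 = 0 := by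
    have h1 := hrow 6
    have h2 := hrow 9
    rw [hxeq6] at h2
    have h3 : (Complex.exp (Complex.I * (2 * π * (u 6 1))) - Complex.exp (Complex.I * (2 * π * (u 9 1)))) * (c 1 + c 3 * Complex.exp (Complex.I * (2 * π * (u 6 0))) + c 5 * Complex.exp (Complex.I * (2 * π * (u 6 0))) ^ 2 + c 7 * Complex.exp (Complex.I * (2 * π * (u 6 0))) ^ 3 + c 9 * Complex.exp (Complex.I * (2 * π * (u 6 0))) ^ 4 + c 11 * Complex.exp (Complex.I * (2 * π * (u 6 0))) ^ 5) = 0 := by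
      linear_combination h1 - h2
    rcases mul_eq_zero.mp h3 with h4 | h4
    · exact absurd (sub_eq_zero.mp h4) hyne6
    · exact h4
  have hP0_6 : c 0 + c 2 * Complex.exp (Complex.I * (2 * π * (u 6 0))) + c 4 * Complex.exp (Complex.I * (2 * π * (u 6 0))) ^ 2 + c 6 * Complex.exp (Complex.I * (2 * π * (u 6 0))) ^ 3 + c 8 * Complex.exp (Complex.I * (2 * π * (u 6 0))) ^ 4 + c 10 * Complex.exp (Complex.I * (2 * π * (u 6 0))) ^ 5 = 0 := by
    linear_combination (hrow 6) - Complex.exp (Complex.I * (2 * π * (u 6 1))) * hP1_6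
  have hxeq7 : Complex.exp (Complex.I * (2 * π * (u 8 0))) = Complex.exp (Complex.I * (2 * π * (u 7 0))) := by
    rw [hu70, hu80]
  have hyne7 : Complex.exp (Complex.I * (2 * π * (u 7 1))) ≠ Complex.exp (Complex.I * (2 * π * (u 8 1))) := by
    rw [hu71, hu81]
    refine exp_ne_exp _ _ (3) (-1) ?_ (Or.inl (by norm_num))
    push_cast
    ring
  have hP1_7 : c 1 + c 3 * Complex.exp (Complex.I * (2 * π * (u 7 0))) + c 5 * Complex.exp (Complex.I * (2 * π * (u 7 0))) ^ 2 + c 7 * Complex.exp (Complex.I * (2 * π * (u 7 0))) ^ 3 + c 9 * Complex.exp (Complex.I * (2 * π * (u 7 0))) ^ 4 + c 11 * Complex.exp (Complex.I * (2 * π * (u 7 0))) ^ 5 = 0 := by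
    have h1 := hrow 7
    have h2 := hrow 8
    rw [hxeq7] at h2
    have h3 : (Complex.exp (Complex.I * (2 * π * (u 7 1))) - Complex.exp (Complex.I * (2 * π * (u 8 1)))) * (c 1 + c 3 * Complex.exp (Complex.I * (2 * π * (u 7 0))) + c 5 * Complex.exp (Complex.I * (2 * π * (u 7 0))) ^ 2 + c 7 * Complex.exp (Complex.I * (2 * π * (u 7 0))) ^ 3 + c 9 * Complex.exp (Complex.I * (2 * π * (u 7 0))) ^ 4 + c 11 * Complex.exp (Complex.I * (2 * π * (u 7 0))) ^ 5) = 0 := by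
      linear_combination h1 - h2
    rcases mul_eq_zero.mp h3 with h4 | h4
    · exact absurd (sub_eq_zero.mp h4) hyne7
    · exact h4
  have hP0_7 : c 0 + c 2 * Complex.exp (Complex.I * (2 * π * (u 7 0))) + c 4 * Complex.exp (Complex.I * (2 * π * (u 7 0))) ^ 2 + c 6 * Complex.exp (Complex.I * (2 * π * (u 7 0))) ^ 3 + c 8 * Complex.exp (Complex.I * (2 * π * (u 7 0))) ^ 4 + c 10 * Complex.exp (Complex.I * (2 * π * (u 7 0))) ^ 5 = 0 := by
    linear_combination (hrow 7) - Complex.exp (Complex.I * (2 * π * (u 7 1))) * hP1_7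
  have hxeq10 : Complex.exp (Complex.I * (2 * π * (u 11 0))) = Complex.exp (Complex.I * (2 * π * (u 10 0))) := by
    rw [hu100, hu110]
  have hyne10 : Complex.exp (Complex.I * (2 * π * (u 10 1))) ≠ Complex.exp (Complex.I * (2 * π * (u 11 1))) := by
    rw [hu101, hu111]
    refine exp_ne_exp _ _ (-3) (1) ?_ (Or.inl (by norm_num))
    push_cast
    ring
  have hP1_10 : c 1 + c 3 * Complex.exp (Complex.I * (2 * π * (u 10 0))) + c 5 * Complex.exp (Complex.I * (2 * π * (u 10 0))) ^ 2 + c 7 * Complex.exp (Complex.I * (2 * π * (u 10 0))) ^ 3 + c 9 * Complex.exp (Complex.I * (2 * π * (u 10 0))) ^ 4 + c 11 * Complex.exp (Complex.I * (2 * π * (u 10 0))) ^ 5 = 0 := by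
    have h1 := hrow 10
    have h2 := hrow 11
    rw [hxeq10] at h2
    have h3 : (Complex.exp (Complex.I * (2 * π * (u 10 1))) - Complex.exp (Complex.I * (2 * π * (u 11 1)))) * (c 1 + c 3 * Complex.exp (Complex.I * (2 * π * (u 10 0))) + c 5 * Complex.exp (Complex.I * (2 * π * (u 10 0))) ^ 2 + c 7 * Complex.exp (Complex.I * (2 * π * (u 10 0))) ^ 3 + c 9 * Complex.exp (Complex.I * (2 * π * (u 10 0))) ^ 4 + c 11 * Complex.exp (Complex.I * (2 * π * (u 10 0))) ^ 5) = 0 := by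
      linear_combination h1 - h2
    rcases mul_eq_zero.mp h3 with h4 | h4
    · exact absurd (sub_eq_zero.mp h4) hyne10
    · exact h4
  have hP0_10 : c 0 + c 2 * Complex.exp (Complex.I * (2 * π * (u 10 0))) + c 4 * Complex.exp (Complex.I * (2 * π * (u 10 0))) ^ 2 + c 6 * Complex.exp (Complex.I * (2 * π * (u 10 0))) ^ 3 + c 8 * Complex.exp (Complex.I * (2 * π * (u 10 0))) ^ 4 + c 10 * Complex.exp (Complex.I * (2 * π * (u 10 0))) ^ 5 = 0 := by
    linear_combination (hrow 10) - Complex.exp (Complex.I * (2 * π * (u 10 1))) * hP1_10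
  set ξ : Fin 6 → ℂ := ![Complex.exp (Complex.I * (2 * π * (u 0 0))), Complex.exp (Complex.I * (2 * π * (u 1 0))), Complex.exp (Complex.I * (2 * π * (u 4 0))), Complex.exp (Complex.I * (2 * π * (u 6 0))), Complex.exp (Complex.I * (2 * π * (u 7 0))), Complex.exp (Complex.I * (2 * π * (u 10 0)))] with hξ
  have hdetV : (Matrix.vandermonde ξ).det ≠ 0 := by
    rw [Matrix.det_vandermonde]
    apply Finset.prod_ne_zero_iff.mpr
    intro i _
    apply Finset.prod_ne_zero_iff.mpr
    intro j hj
    apply sub_ne_zero.mpr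
    simp only [Finset.mem_Ioi] at hj
    fin_cases i <;> fin_cases j <;> (try exact absurd hj (by decide)) <;>
      simp only [hξ, Matrix.cons_val_zero, Matrix.cons_val_one, Matrix.head_cons,
        Matrix.cons_val_succ]
    case _ => refine exp_ne_exp _ _ (-3) (1) ?_ (Or.inl (by norm_num)); rw [hu10, hu00]; push_cast; ring
    case _ => refine exp_ne_exp _ _ (3) (-1) ?_ (Or.inl (by norm_num)); rw [hu40, hu00]; push_cast; ring
    case _ => refine exp_ne_exp _ _ (2) 0 ?_ (Or.inr (by decide)); rw [hu60, hu00]; push_cast; ring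
    case _ => refine exp_ne_exp _ _ (-1) (1) ?_ (Or.inl (by norm_num)); rw [hu70, hu00]; push_cast; ring
    case _ => refine exp_ne_exp _ _ (5) (-1) ?_ (Or.inl (by norm_num)); rw [hu100, hu00]; push_cast; ring
    case _ => refine exp_ne_exp _ _ (6) (-2) ?_ (Or.inl (by norm_num)); rw [hu40, hu10]; push_cast; ring
    case _ => refine exp_ne_exp _ _ (5) (-1) ?_ (Or.inl (by norm_num)); rw [hu60, hu10]; push_cast; ring
    case _ => refine exp_ne_exp _ _ (2) 0 ?_ (Or.inr (by decide)); rw [hu70, hu10]; push_cast; ring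
    case _ => refine exp_ne_exp _ _ (8) (-2) ?_ (Or.inl (by norm_num)); rw [hu100, hu10]; push_cast; ring
    case _ => refine exp_ne_exp _ _ (-1) (1) ?_ (Or.inl (by norm_num)); rw [hu60, hu40]; push_cast; ring
    case _ => refine exp_ne_exp _ _ (-4) (2) ?_ (Or.inl (by norm_num)); rw [hu70, hu40]; push_cast; ring
    case _ => refine exp_ne_exp _ _ (2) 0 ?_ (Or.inr (by decide)); rw [hu100, hu40]; push_cast; ring
    case _ => refine exp_ne_exp _ _ (-3) (1) ?_ (Or.inl (by norm_num)); rw [hu70, hu60]; push_cast; ring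
    case _ => refine exp_ne_exp _ _ (3) (-1) ?_ (Or.inl (by norm_num)); rw [hu100, hu60]; push_cast; ring
    case _ => refine exp_ne_exp _ _ (6) (-2) ?_ (Or.inl (by norm_num)); rw [hu100, hu70]; push_cast; ring
  have hVinv := Matrix.nonsing_inv_mul (Matrix.vandermonde ξ) (isUnit_iff_ne_zero.mpr hdetV)
  have hd0 : (![c 0, c 2, c 4, c 6, c 8, c 10] : Fin 6 → ℂ) = 0 := by
    have hmv : (Matrix.vandermonde ξ).mulVec (![c 0, c 2, c 4, c 6, c 8, c 10] : Fin 6 → ℂ) = 0 := by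
      funext i
      fin_cases i <;>
        simp only [Matrix.mulVec, dotProduct, Fin.sum_univ_succ, Fin.sum_univ_zero,
          Matrix.vandermonde, hξ, Matrix.cons_val_zero, Matrix.cons_val_one, Matrix.head_cons,
          Matrix.cons_val_succ, Matrix.of_apply, Pi.zero_apply]
      case _ => norm_num; linear_combination hP0_0
      case _ => norm_num; linear_combination hP0_1
      case _ => norm_num; linear_combination hP0_4
      case _ => norm_num; linear_combination hP0_6
      case _ => norm_num; linear_combination hP0_7
      case _ => norm_num; linear_combination hP0_10
    calc (![c 0, c 2, c 4, c 6, c 8, c 10] : Fin 6 → ℂ)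
        = ((Matrix.vandermonde ξ)⁻¹ * Matrix.vandermonde ξ).mulVec (![c 0, c 2, c 4, c 6, c 8, c 10] : Fin 6 → ℂ) := by
          rw [hVinv]; simp [Matrix.one_mulVec]
      _ = (Matrix.vandermonde ξ)⁻¹.mulVec ((Matrix.vandermonde ξ).mulVec (![c 0, c 2, c 4, c 6, c 8, c 10] : Fin 6 → ℂ)) := by
          rw [Matrix.mulVec_mulVec]
      _ = 0 := by rw [hmv]; simp
  have hd1 : (![c 1, c 3, c 5, c 7, c 9, c 11] : Fin 6 → ℂ) = 0 := by
    have hmv : (Matrix.vandermonde ξ).mulVec (![c 1, c 3, c 5, c 7, c 9, c 11] : Fin 6 → ℂ) = 0 := by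
      funext i
      fin_cases i <;>
        simp only [Matrix.mulVec, dotProduct, Fin.sum_univ_succ, Fin.sum_univ_zero,
          Matrix.vandermonde, hξ, Matrix.cons_val_zero, Matrix.cons_val_one, Matrix.head_cons,
          Matrix.cons_val_succ, Matrix.of_apply, Pi.zero_apply]
      case _ => norm_num; linear_combination hP1_0
      case _ => norm_num; linear_combination hP1_1
      case _ => norm_num; linear_combination hP1_4
      case _ => norm_num; linear_combination hP1_6
      case _ => norm_num; linear_combination hP1_7
      case _ => norm_num; linear_combination hP1_10
    calc (![c 1, c 3, c 5, c 7, c 9, c 11] : Fin 6 → ℂ)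
        = ((Matrix.vandermonde ξ)⁻¹ * Matrix.vandermonde ξ).mulVec (![c 1, c 3, c 5, c 7, c 9, c 11] : Fin 6 → ℂ) := by
          rw [hVinv]; simp [Matrix.one_mulVec]
      _ = (Matrix.vandermonde ξ)⁻¹.mulVec ((Matrix.vandermonde ξ).mulVec (![c 1, c 3, c 5, c 7, c 9, c 11] : Fin 6 → ℂ)) := by
          rw [Matrix.mulVec_mulVec]
      _ = 0 := by rw [hmv]; simp
  apply hc0
  funext k
  have e0 := congrFun hd0
  have e1 := congrFun hd1
  fin_cases k
  · simpa using e0 0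
  · simpa using e1 0
  · simpa using e0 1
  · simpa using e1 1
  · simpa using e0 2
  · simpa using e1 2
  · simpa using e0 3
  · simpa using e1 3
  · simpa using e0 4
  · simpa using e1 4
  · simpa using e0 5
  · simpa using e1 5
end
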